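/- If f is holomorphic on {Re(x) > 0} and satisfies the three-term equation λ f(x) - f(x+1) = (x+1)^(-2q) f(x/(x+1)) for all Re(x) > 0 with λ ≠ 0, then φ₊ := (f + J_q f)/2 satisfies P_q^+ φ₊ = λ φ₊ and φ₋ := (f - J_q f)/2 satisfies P_q^- φ₋ = λ φ₋. -/
import Mathlib


noncomputable def Jq (q : ℂ) (f : ℂ → ℂ) (x : ℂ) : ℂ := x ^ (-2 * q) * f (1 / x)

noncomputable def Pq (q ε : ℂ) (f : ℂ → ℂ) (x : ℂ) : ℂ :=
  (x + 1) ^ (-2 * q) * f (x / (x + 1)) + ε * ((x + 1) ^ (-2 * q) * f (1 / (x + 1)))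

private lemma mul_cpow_re_pos {a b : ℂ} (ha : 0 < a.re) (hb : 0 < b.re) (w : ℂ) :
    (a * b) ^ w = a ^ w * b ^ w := by
  have ha0 : a ≠ 0 := by intro h; simp [h] at ha
  have hb0 : b ≠ 0 := by intro h; simp [h] at hb
  have haarg : |a.arg| < Real.pi / 2 := Complex.abs_arg_lt_pi_div_two_iff.2 (Or.inl ha)
  have hbarg : |b.arg| < Real.pi / 2 := Complex.abs_arg_lt_pi_div_two_iff.2 (Or.inl hb)
  have harg : a.arg + b.arg ∈ Set.Ioc (-Real.pi) Real.pi := by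
    constructor
    · nlinarith [abs_lt.1 haarg, abs_lt.1 hbarg]
    · nlinarith [abs_lt.1 haarg, abs_lt.1 hbarg]
  rw [Complex.cpow_def_of_ne_zero (mul_ne_zero ha0 hb0), Complex.cpow_def_of_ne_zero ha0,
    Complex.cpow_def_of_ne_zero hb0, Complex.log_mul ha0 hb0 harg, add_mul, Complex.exp_add]

theorem three_term_to_eigenfunctions (q lam : ℂ) (hq : 0 < q.re) (hlam : lam ≠ 0)
    (f : ℂ → ℂ) (hf : DifferentiableOn ℂ f {x : ℂ | 0 < x.re})
    (h3 : ∀ x : ℂ, 0 < x.re →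
      lam * f x - f (x + 1) = (x + 1) ^ (-2 * q) * f (x / (x + 1))) :
    (∀ x : ℂ, 0 < x.re →
      Pq q 1 (fun y => (f y + Jq q f y) / 2) x = lam * ((f x + Jq q f x) / 2)) ∧
    (∀ x : ℂ, 0 < x.re →
      Pq q (-1) (fun y => (f y - Jq q f y) / 2) x = lam * ((f x - Jq q f x) / 2)) := by
  have key : ∀ x : ℂ, 0 < x.re →
      ((x + 1) ^ (-2 * q) * (x / (x + 1)) ^ (-2 * q) = x ^ (-2 * q)) ∧
      ((x + 1) ^ (-2 * q) * (1 / (x + 1)) ^ (-2 * q) = 1) ∧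
      (x ^ (-2 * q) * ((x + 1) / x) ^ (-2 * q) = (x + 1) ^ (-2 * q)) ∧
      (lam * f (1/x) - f ((x + 1) / x) = ((x + 1) / x) ^ (-2 * q) * f (1 / (x + 1))) := by
    intro x hx
    have hx0 : x ≠ 0 := by intro h; simp [h] at hx
    have hx1re : 0 < (x + 1).re := by simp; linarith
    have hx10 : x + 1 ≠ 0 := by intro h; simp [h] at hx1re
    have hns : 0 < Complex.normSq (x + 1) := Complex.normSq_pos.2 hx10
    have hnsx : 0 < Complex.normSq x := Complex.normSq_pos.2 hx0
    have hfrac : 0 < (x / (x + 1)).re := by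
      rw [Complex.div_re]
      have h1 : x.re * (x + 1).re / Complex.normSq (x + 1) > 0 :=
        div_pos (mul_pos hx hx1re) hns
      have h2 : 0 ≤ x.im * (x + 1).im / Complex.normSq (x + 1) := by
        apply div_nonneg _ hns.le
        simp [mul_self_nonneg]
      linarith
    have hfrac2 : 0 < ((x + 1) / x).re := by
      rw [Complex.div_re]
      have h1 : (x + 1).re * x.re / Complex.normSq x > 0 :=
        div_pos (mul_pos hx1re hx) hnsx
      have h2 : 0 ≤ (x + 1).im * x.im / Complex.normSq x := by
        apply div_nonneg _ hnsx.le
        simp [mul_self_nonneg]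
      linarith
    have hinv : 0 < (1 / (x + 1)).re := by
      rw [one_div, Complex.inv_re]; exact div_pos hx1re hns
    have hinvx : 0 < (1 / x).re := by
      rw [one_div, Complex.inv_re]; exact div_pos hx hnsx
    refine ⟨?_, ?_, ?_, ?_⟩
    · rw [← mul_cpow_re_pos hx1re hfrac, mul_div_cancel₀ _ hx10]
    · rw [← mul_cpow_re_pos hx1re hinv, mul_one_div, div_self hx10, Complex.one_cpow]
    · rw [← mul_cpow_re_pos hx hfrac2, mul_div_cancel₀ _ hx0]
    · have := h3 (1 / x) hinvx
      have e1 : (1 : ℂ) / x + 1 = (x + 1) / x := by field_simp; ring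
      have e2 : (1 : ℂ) / x / ((x + 1) / x) = 1 / (x + 1) := by
        rw [div_div_eq_mul_div, one_div_mul_cancel hx0]
      rw [e1, e2] at this
      exact this
  constructor
  · intro x hx
    obtain ⟨k1, k2, k3, hinv3⟩ := key x hx
    have h3x := h3 x hx
    simp only [Pq, Jq, one_mul, one_div_one_div, one_div_div, div_one]
    linear_combination (-1/2) * h3x - (x ^ (-2*q) / 2) * hinv3 + (f ((x+1)/x) / 2) * k1
      + (f (x+1) / 2) * k2 - (f (1/(x+1)) / 2) * k3
  · intro x hx
    obtain ⟨k1, k2, k3, hinv3⟩ := key x hx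
    have h3x := h3 x hx
    simp only [Pq, Jq, one_div_one_div, one_div_div, div_one]
    linear_combination (-1/2) * h3x + (x ^ (-2*q) / 2) * hinv3 - (f ((x+1)/x) / 2) * k1
      + (f (x+1) / 2) * k2 + (f (1/(x+1)) / 2) * k3
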